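/- arXiv:1307.7577 — 2 statements merged into one kernel-verified Lean document; each statement's English description precedes it below -/
import Mathlib

section
/- Let y ≠ 0, ‖Xᵀy‖_∞ ≥ λ₁ > λ₂ > 0, θ₁* the projection of y/λ₁ onto C = {θ : ‖Xᵀθ‖_∞ ≤ 1}; set a = y/λ₁ - θ₁*, b = y/λ₂ - θ₁*, Ω = {θ : ⟨θ₁* - y/λ₁, θ - θ₁*⟩ ≥ 0, ⟨θ - y/λ₂, θ₁* - θ⟩ ≥ 0}. If a ≠ 0 and ⟨b,a⟩/(‖b‖₂‖a‖₂) > |⟨x_j,a⟩|/(‖x_j‖₂‖a‖₂), then max_{θ ∈ Ω} ⟨x_j, θ⟩ = ⟨x_j, θ₁*⟩ + ((1/λ₂ - 1/λ₁)/2)[‖x_j^⊥‖₂‖y^⊥‖₂ + ⟨x_j^⊥, y^⊥⟩], where x_j^⊥ and y^⊥ are the components of x_j and y orthogonal to a. -/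
/-!
After translating by `θ₁*`, `Ω` becomes the intersection of the halfspace `⟪a, u⟫ ≤ 0` with the
ball `‖u‖² ≤ ⟪b, u⟫` of diameter `[0, b]`. With `x^⊥, b^⊥` the components orthogonal to `a`, the
point `w = (b^⊥ + (‖b^⊥‖ / ‖x^⊥‖) x^⊥) / 2` lies on the boundary sphere and on the hyperplane
`⟪a, w⟫ = 0`, and `x = ν a + μ (2w - b)` with `μ = ‖x^⊥‖ / ‖b^⊥‖ ≥ 0`. The angle condition says
exactly that the multiplier `ν` of the halfspace constraint is nonnegative, so `w` is a KKT point
and weak duality shows it is a maximiser. Finally `b^⊥ = (1/λ₂ - 1/λ₁) y^⊥`, since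
`b = a + (1/λ₂ - 1/λ₁) y`.
-/

open RealInnerProductSpace

section
variable {E : Type*} [NormedAddCommGroup E] [InnerProductSpace ℝ E]

/-- The paper's `x^⊥`: the component of `x` orthogonal to `a`. -/
noncomputable def rejection (a x : E) : E := x - (⟪x, a⟫ / ‖a‖ ^ 2) • a

lemma rejection_add_smul (a x : E) : rejection a x + (⟪x, a⟫ / ‖a‖ ^ 2) • a = x :=
  sub_add_cancel x _

lemma inner_rejection_left (a x : E) : ⟪rejection a x, a⟫ = 0 := by
  rcases eq_or_ne a 0 with rfl | ha
  · simp
  · have : ‖a‖ ^ 2 ≠ 0 := by positivity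
    rw [rejection, inner_sub_left, real_inner_smul_left, real_inner_self_eq_norm_sq,
      div_mul_cancel₀ _ this, sub_self]

lemma inner_rejection_right (a x : E) : ⟪a, rejection a x⟫ = 0 := by
  rw [real_inner_comm, inner_rejection_left]

lemma inner_eq_inner_rejection_add (a x u : E) :
    ⟪x, u⟫ = ⟪rejection a x, u⟫ + ⟪x, a⟫ / ‖a‖ ^ 2 * ⟪a, u⟫ := by
  conv_lhs => rw [← rejection_add_smul a x]
  rw [inner_add_left, real_inner_smul_left]

lemma sq_norm_mul_sq_norm_eq (a x : E) :
    ‖a‖ ^ 2 * ‖x‖ ^ 2 = ‖a‖ ^ 2 * ‖rejection a x‖ ^ 2 + ⟪x, a⟫ ^ 2 := by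
  rcases eq_or_ne a 0 with rfl | ha
  · simp
  · have : ‖a‖ ≠ 0 := norm_ne_zero_iff.2 ha
    conv_lhs => rw [← rejection_add_smul a x]
    rw [norm_add_sq_real, real_inner_smul_right, inner_rejection_left, norm_smul,
      Real.norm_eq_abs, mul_pow, sq_abs]
    field_simp
    ring

lemma rejection_add_smul_self {a : E} (ha : a ≠ 0) (κ : ℝ) (y : E) :
    rejection a (a + κ • y) = κ • rejection a y := by
  have : ‖a‖ ^ 2 ≠ 0 := by positivity
  simp only [rejection, inner_add_left, real_inner_smul_left, real_inner_self_eq_norm_sq,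
    add_div, div_self this, mul_div_assoc]
  module

lemma sq_norm_midpoint_eq_inner_of_norm_eq {c v : E} (h : ‖v‖ = ‖c‖) :
    ‖(1 / 2 : ℝ) • (c + v)‖ ^ 2 = ⟪c, (1 / 2 : ℝ) • (c + v)⟫ := by
  rw [norm_smul, mul_pow, norm_add_sq_real, real_inner_smul_right, inner_add_right,
    real_inner_self_eq_norm_sq, h]
  norm_num
  ring

lemma inner_le_inner_of_multipliers {a b w x u : E} {ν μ : ℝ} (hν : 0 ≤ ν) (hμ : 0 ≤ μ)
    (haw : ⟪a, w⟫ = 0) (hw : ‖w‖ ^ 2 = ⟪b, w⟫) (hx : x = ν • a + μ • ((2 : ℝ) • w - b))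
    (hau : ⟪a, u⟫ ≤ 0) (hu : ‖u‖ ^ 2 ≤ ⟪b, u⟫) : ⟪x, u⟫ ≤ ⟪x, w⟫ := by
  have hwu : 2 * ⟪w, u⟫ - ‖u‖ ^ 2 ≤ ‖w‖ ^ 2 := by
    linarith [norm_sub_sq_real w u, sq_nonneg ‖w - u‖]
  have hxu : ⟪x, u⟫ = ν * ⟪a, u⟫ + μ * (2 * ⟪w, u⟫ - ⟪b, u⟫) := by
    simp only [hx, inner_add_left, inner_sub_left, real_inner_smul_left]
  have hxw : ⟪x, w⟫ = μ * ‖w‖ ^ 2 := by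
    simp only [hx, inner_add_left, inner_sub_left, real_inner_smul_left, haw,
      real_inner_self_eq_norm_sq, ← hw]
    ring
  rw [hxu, hxw]
  linarith [mul_nonpos_of_nonneg_of_nonpos hν hau, mul_le_mul_of_nonneg_left hwu hμ,
    mul_le_mul_of_nonneg_left hu hμ]

lemma inner_pos_and_mul_lt_of_angle_lt {a b x : E} (ha : a ≠ 0) (hx : x ≠ 0)
    (h : |⟪x, a⟫| / (‖x‖ * ‖a‖) < ⟪b, a⟫ / (‖b‖ * ‖a‖)) :
    0 < ⟪b, a⟫ ∧ |⟪x, a⟫| * ‖rejection a b‖ < ⟪b, a⟫ * ‖rejection a x‖ := by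
  have hba : 0 < ⟪b, a⟫ := by
    have hpos : 0 < ⟪b, a⟫ / (‖b‖ * ‖a‖) := (div_nonneg (abs_nonneg _) (by positivity)).trans_lt h
    rcases div_pos_iff.1 hpos with h' | h'
    · exact h'.1
    · exact absurd h'.2 (not_lt.2 (by positivity))
  have hb : b ≠ 0 := by
    rintro rfl
    simp at hba
  have hA : 0 < ‖a‖ ^ 2 := by positivity
  have h1 : |⟪x, a⟫| * ‖b‖ < ⟪b, a⟫ * ‖x‖ := by
    rw [div_lt_div_iff₀ (by positivity) (by positivity)] at h
    exact lt_of_mul_lt_mul_right (by linarith) (norm_nonneg a)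
  have h2 : ⟪x, a⟫ ^ 2 * ‖b‖ ^ 2 < ⟪b, a⟫ ^ 2 * ‖x‖ ^ 2 := by
    have := pow_lt_pow_left₀ h1 (by positivity) two_ne_zero
    rwa [mul_pow, mul_pow, sq_abs] at this
  have h3 : ⟪x, a⟫ ^ 2 * ‖rejection a b‖ ^ 2 < ⟪b, a⟫ ^ 2 * ‖rejection a x‖ ^ 2 := by
    refine lt_of_mul_lt_mul_left ?_ hA.le
    linear_combination mul_lt_mul_of_pos_left h2 hA - ⟪x, a⟫ ^ 2 * sq_norm_mul_sq_norm_eq a b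
      + ⟪b, a⟫ ^ 2 * sq_norm_mul_sq_norm_eq a x
  refine ⟨hba, lt_of_pow_lt_pow_left₀ 2 (by positivity) ?_⟩
  rwa [mul_pow, mul_pow, sq_abs]

theorem isGreatest_inner_halfspace_inter_ball {a b x : E} (hba : 0 < ⟪b, a⟫)
    (h : |⟪x, a⟫| * ‖rejection a b‖ < ⟪b, a⟫ * ‖rejection a x‖) :
    IsGreatest {v | ∃ u : E, (⟪a, u⟫ ≤ 0 ∧ ‖u‖ ^ 2 ≤ ⟪b, u⟫) ∧ v = ⟪x, u⟫}
      ((‖rejection a x‖ * ‖rejection a b‖ + ⟪rejection a x, rejection a b⟫) / 2) := by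
  set xp := rejection a x
  set bp := rejection a b
  have ha : a ≠ 0 := by
    rintro rfl
    simp at hba
  have hA : 0 < ‖a‖ ^ 2 := by positivity
  have hxp : xp ≠ 0 := by
    rintro hxp
    rw [hxp, norm_zero, mul_zero] at h
    exact (mul_nonneg (abs_nonneg _) (norm_nonneg _)).not_gt h
  have hnxp : 0 < ‖xp‖ := norm_pos_iff.2 hxp
  set w : E := (1 / 2 : ℝ) • (bp + (‖bp‖ / ‖xp‖) • xp)
  have haw : ⟪a, w⟫ = 0 := by
    simp only [w, inner_smul_right, inner_add_right, inner_rejection_right, xp, bp]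
    ring
  have hw : ‖w‖ ^ 2 = ⟪b, w⟫ := by
    rw [inner_eq_inner_rejection_add a b w, haw, mul_zero, add_zero]
    refine sq_norm_midpoint_eq_inner_of_norm_eq ?_
    rw [norm_smul, Real.norm_of_nonneg (by positivity), div_mul_cancel₀ _ hnxp.ne']
  have hxw : ⟪x, w⟫ = (‖xp‖ * ‖bp‖ + ⟪xp, bp⟫) / 2 := by
    rw [inner_eq_inner_rejection_add a x w, haw, mul_zero, add_zero]
    change ⟪xp, w⟫ = _
    simp only [w, real_inner_smul_right, inner_add_right, real_inner_self_eq_norm_sq]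
    field_simp
    ring
  refine ⟨⟨w, ⟨haw.le, hw.le⟩, hxw.symm⟩, ?_⟩
  rintro _ ⟨u, ⟨hau, hu⟩, rfl⟩
  rcases eq_or_ne bp 0 with hbp | hbp
  · -- `b` is then a positive multiple of `a`, and the feasible set is `{0}`
    have hu0 : ‖u‖ ^ 2 ≤ 0 := by
      rw [inner_eq_inner_rejection_add a b u] at hu
      change ‖u‖ ^ 2 ≤ ⟪bp, u⟫ + _ at hu
      rw [hbp, inner_zero_left, zero_add] at hu
      exact hu.trans (mul_nonpos_of_nonneg_of_nonpos (by positivity) hau)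
    have : u = 0 := by simpa using hu0
    simp [this, hbp]
  · have hnbp : 0 < ‖bp‖ := norm_pos_iff.2 hbp
    rw [← hxw]
    refine inner_le_inner_of_multipliers (ν := (⟪x, a⟫ + ‖xp‖ / ‖bp‖ * ⟪b, a⟫) / ‖a‖ ^ 2)
      (μ := ‖xp‖ / ‖bp‖) ?_ (by positivity) haw hw ?_ hau hu
    · have : 0 ≤ ⟪x, a⟫ * ‖bp‖ + ‖xp‖ * ⟪b, a⟫ := by
        linarith [mul_le_mul_of_nonneg_right (neg_abs_le ⟪x, a⟫) hnbp.le]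
      refine div_nonneg ?_ hA.le
      convert div_nonneg this hnbp.le using 1
      field_simp
    · have h2w : (2 : ℝ) • w = bp + (‖bp‖ / ‖xp‖) • xp := by
        simp only [w, smul_smul]
        norm_num
      have hμ : ‖xp‖ / ‖bp‖ * (‖bp‖ / ‖xp‖) = 1 := by field_simp
      linear_combination (norm := module) -(rejection_add_smul a x)
        - (‖xp‖ / ‖bp‖) • rejection_add_smul a b - (‖xp‖ / ‖bp‖) • h2w - hμ • xp

lemma inner_sub_nonneg_and_iff (θ₁ c d u : E) :
    (⟪θ₁ - c, u⟫ ≥ 0 ∧ ⟪θ₁ + u - d, -u⟫ ≥ 0) ↔ (⟪c - θ₁, u⟫ ≤ 0 ∧ ‖u‖ ^ 2 ≤ ⟪d - θ₁, u⟫) := by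
  have e₁ : ⟪θ₁ - c, u⟫ = -⟪c - θ₁, u⟫ := by rw [← inner_neg_left, neg_sub]
  have e₂ : ⟪θ₁ + u - d, -u⟫ = ⟪d - θ₁, u⟫ - ‖u‖ ^ 2 := by
    rw [show θ₁ + u - d = u - (d - θ₁) by abel, inner_neg_right, inner_sub_left,
      real_inner_self_eq_norm_sq, real_inner_comm u]
    ring
  rw [e₁, e₂]
  constructor <;> rintro ⟨h₁, h₂⟩ <;> constructor <;> linarith

lemma IsGreatest.inner_translate {x θ₁ c d : E} {m : ℝ}
    (h : IsGreatest {v | ∃ u : E, (⟪c - θ₁, u⟫ ≤ 0 ∧ ‖u‖ ^ 2 ≤ ⟪d - θ₁, u⟫) ∧ v = ⟪x, u⟫} m) :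
    IsGreatest {v | ∃ θ : E, (⟪θ₁ - c, θ - θ₁⟫ ≥ 0 ∧ ⟪θ - d, θ₁ - θ⟫ ≥ 0) ∧ v = ⟪x, θ⟫}
      (⟪x, θ₁⟫ + m) := by
  constructor
  · obtain ⟨u, hu, rfl⟩ := h.1
    refine ⟨θ₁ + u, ?_, (inner_add_right _ _ _).symm⟩
    simpa using (inner_sub_nonneg_and_iff θ₁ c d u).2 hu
  · rintro _ ⟨θ, hθ, rfl⟩
    have hθ' : ⟪x, θ - θ₁⟫ ≤ m :=
      h.2 ⟨θ - θ₁, (inner_sub_nonneg_and_iff θ₁ c d _).1 (by simpa using hθ), rfl⟩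
    rw [inner_sub_right] at hθ'
    linarith

end

theorem stmt_12_general {n p : ℕ} (X : Fin p → EuclideanSpace ℝ (Fin n))
    (y : EuclideanSpace ℝ (Fin n))
    (lam1 lam2 : ℝ) (hlam2 : 0 < lam2) (hlam12 : lam2 < lam1)
    (θ1 : EuclideanSpace ℝ (Fin n))
    (a b : EuclideanSpace ℝ (Fin n))
    (ha : a = (1 / lam1) • y - θ1) (hb : b = (1 / lam2) • y - θ1)
    (j : Fin p) (hj : X j ≠ 0)
    (ha0 : a ≠ 0)
    (hangle : ⟪b, a⟫ / (‖b‖ * ‖a‖) > |(⟪X j, a⟫)| / (‖X j‖ * ‖a‖)) :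
    IsGreatest {v : ℝ | ∃ θ : EuclideanSpace ℝ (Fin n),
        (⟪θ1 - (1 / lam1) • y, θ - θ1⟫ ≥ 0 ∧ ⟪θ - (1 / lam2) • y, θ1 - θ⟫ ≥ 0) ∧
        v = ⟪X j, θ⟫}
      (⟪X j, θ1⟫ + ((1 / lam2 - 1 / lam1) / 2) *
        (‖X j - (⟪X j, a⟫ / ‖a‖ ^ 2) • a‖ * ‖y - (⟪y, a⟫ / ‖a‖ ^ 2) • a‖
          + ⟪X j - (⟪X j, a⟫ / ‖a‖ ^ 2) • a, y - (⟪y, a⟫ / ‖a‖ ^ 2) • a⟫)) := by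
  obtain ⟨hba, hmul⟩ := inner_pos_and_mul_lt_of_angle_lt ha0 hj hangle
  have hκ : 0 < 1 / lam2 - 1 / lam1 := sub_pos.2 (one_div_lt_one_div_of_lt hlam2 hlam12)
  have hrej : rejection a b = (1 / lam2 - 1 / lam1) • rejection a y := by
    rw [← rejection_add_smul_self ha0]
    congr 1
    rw [ha, hb]
    module
  have key := isGreatest_inner_halfspace_inter_ball hba hmul
  rw [ha, hb] at key
  convert key.inner_translate using 2
  rw [← ha, ← hb, hrej, norm_smul, real_inner_smul_right, Real.norm_of_nonneg hκ.le]
  unfold rejection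
  ring

/-- Theorem 3, Case 1: if `a ≠ 0` and `⟪b,a⟫/(‖b‖‖a‖) > |⟪x_j,a⟫|/(‖x_j‖‖a‖)`, then
`max_{θ ∈ Ω} ⟪x_j, θ⟫ = ⟪x_j, θ₁*⟫ + ((1/λ₂ - 1/λ₁)/2)(‖x_j^⊥‖‖y^⊥‖ + ⟪x_j^⊥, y^⊥⟫)`,
where `x_j^⊥, y^⊥` are the components of `x_j, y` orthogonal to `a`. -/
theorem stmt_12 {n p : ℕ} (X : Fin p → EuclideanSpace ℝ (Fin n))
    (y : EuclideanSpace ℝ (Fin n)) (hy : y ≠ 0) (lmax : ℝ)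
    (hlmax : IsGreatest (Set.range fun j => |(⟪X j, y⟫)|) lmax)
    (lam1 lam2 : ℝ) (hlam2 : 0 < lam2) (hlam12 : lam2 < lam1) (hlam1le : lam1 ≤ lmax)
    (θ1 : EuclideanSpace ℝ (Fin n))
    (hθ1mem : ∀ j, |(⟪X j, θ1⟫)| ≤ 1)
    (hθ1opt : ∀ θ : EuclideanSpace ℝ (Fin n), (∀ j, |(⟪X j, θ⟫)| ≤ 1) →
      ‖θ1 - (1 / lam1) • y‖ ≤ ‖θ - (1 / lam1) • y‖)
    (a b : EuclideanSpace ℝ (Fin n))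
    (ha : a = (1 / lam1) • y - θ1) (hb : b = (1 / lam2) • y - θ1)
    (j : Fin p) (hj : X j ≠ 0)
    (ha0 : a ≠ 0)
    (hangle : ⟪b, a⟫ / (‖b‖ * ‖a‖) > |(⟪X j, a⟫)| / (‖X j‖ * ‖a‖)) :
    IsGreatest {v : ℝ | ∃ θ : EuclideanSpace ℝ (Fin n),
        (⟪θ1 - (1 / lam1) • y, θ - θ1⟫ ≥ 0 ∧ ⟪θ - (1 / lam2) • y, θ1 - θ⟫ ≥ 0) ∧
        v = ⟪X j, θ⟫}
      (⟪X j, θ1⟫ + ((1 / lam2 - 1 / lam1) / 2) *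
        (‖X j - (⟪X j, a⟫ / ‖a‖ ^ 2) • a‖ * ‖y - (⟪y, a⟫ / ‖a‖ ^ 2) • a‖
          + ⟪X j - (⟪X j, a⟫ / ‖a‖ ^ 2) • a, y - (⟪y, a⟫ / ‖a‖ ^ 2) • a⟫)) :=
  stmt_12_general X y lam1 lam2 hlam2 hlam12 θ1 a b ha hb j hj ha0 hangle
end

section
/- Safe screening via Sasvi: with u_j^+(λ₂) = max_{θ ∈ Ω} ⟨x_j, θ⟩ and u_j^-(λ₂) = max_{θ ∈ Ω} ⟨-x_j, θ⟩, if u_j^+(λ₂) < 1 and u_j^-(λ₂) < 1, then the j-th coefficient of any optimal Lasso solution at parameter λ₂ is zero. -/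
open RealInnerProductSpace

/-! The Lasso optimum `β` at `λ` yields the dual point `θ = (y - Xβ) / λ`, which by the
first-order conditions lies in the dual feasible set `K = {θ : ∀ i, |⟪xᵢ, θ⟫| ≤ 1}` and satisfies
`βᵢ ⟪xᵢ, θ⟫ = |βᵢ|`; in particular `|⟪xⱼ, θ⟫| < 1` forces `βⱼ = 0`. Both `θ₁` and `θ₂` are
projections onto the convex set `K` (of `y / λ₁` and of `y / λ₂`), and the two variational
inequalities characterising these projections, tested against each other, say exactly that
`θ₂ ∈ Ω`. Hence `|⟪xⱼ, θ₂⟫| ≤ max u⁺ u⁻ < 1`. -/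

lemma nonneg_of_forall_mul_add_sq_nonneg {a c : ℝ}
    (h : ∀ t : ℝ, 0 < t → t ≤ 1 → 0 ≤ t * a + t ^ 2 * c) : 0 ≤ a := by
  by_contra! ha
  have hpos : 0 < -a + |c| := by linarith [abs_nonneg c]
  -- the first-order term `t * a` dominates `t ^ 2 * c` for this `t`
  set t := -a / (-a + |c|)
  have ht : 0 < t := div_pos (neg_pos.mpr ha) hpos
  have ht1 : t ≤ 1 := (div_le_one hpos).mpr (by linarith [abs_nonneg c])
  have htc : t * (-a + |c|) = -a := div_mul_cancel₀ _ hpos.ne'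
  have hc : t ^ 2 * c ≤ t ^ 2 * |c| := mul_le_mul_of_nonneg_left (le_abs_self c) (sq_nonneg t)
  have hc' : t ^ 2 * |c| = t * (-a) - t ^ 2 * (-a) := by linear_combination t * htc
  linarith [h t ht ht1, mul_neg_of_pos_of_neg (pow_pos ht 2) ha]

section Projection

variable {F : Type*} [NormedAddCommGroup F] [InnerProductSpace ℝ F]

lemma real_inner_sub_nonneg_of_forall_norm_sub_le {K : Set F} (hK : Convex ℝ K) {u v : F}
    (hv : v ∈ K) (hmin : ∀ w ∈ K, ‖v - u‖ ≤ ‖w - u‖) {w : F} (hw : w ∈ K) :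
    0 ≤ ⟪v - u, w - v⟫ := by
  have hinf : ‖u - v‖ = ⨅ w : K, ‖u - w‖ := by
    have : Nonempty K := ⟨⟨v, hv⟩⟩
    refine le_antisymm (le_ciInf fun w => ?_) (ciInf_le (f := fun w : K => ‖u - w‖) ⟨0, ?_⟩ ⟨v, hv⟩)
    · simpa only [norm_sub_rev u] using hmin w w.2
    · rintro _ ⟨w, rfl⟩
      exact norm_nonneg _
  have := (norm_eq_iInf_iff_real_inner_le_zero hK hv).mp hinf w hw
  rw [← neg_sub v u, inner_neg_left] at this
  linarith

end Projection

section Lasso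

variable {ι E : Type*} [NormedAddCommGroup E] [InnerProductSpace ℝ E]

def lassoDualFeasible (X : ι → E) : Set E := {θ | ∀ i, |⟪X i, θ⟫| ≤ 1}

lemma convex_lassoDualFeasible (X : ι → E) : Convex ℝ (lassoDualFeasible X) := by
  intro θ hθ θ' hθ' a b ha hb hab i
  rw [inner_add_right, real_inner_smul_right, real_inner_smul_right]
  calc |a * ⟪X i, θ⟫ + b * ⟪X i, θ'⟫| ≤ a * |⟪X i, θ⟫| + b * |⟪X i, θ'⟫| := by
        simpa only [abs_mul, abs_of_nonneg ha, abs_of_nonneg hb] using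
          abs_add_le (a * ⟪X i, θ⟫) (b * ⟪X i, θ'⟫)
    _ ≤ a * 1 + b * 1 :=
        add_le_add (mul_le_mul_of_nonneg_left (hθ i) ha) (mul_le_mul_of_nonneg_left (hθ' i) hb)
    _ = 1 := by rw [mul_one, mul_one, hab]

variable [Fintype ι]

noncomputable def lassoObjective (X : ι → E) (y : E) (lam : ℝ) (β : ι → ℝ) : ℝ :=
  (1 / 2) * ‖(∑ i, β i • X i) - y‖ ^ 2 + lam * ∑ i, |β i|

noncomputable def lassoDual (X : ι → E) (y : E) (lam : ℝ) (β : ι → ℝ) : E :=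
  lam⁻¹ • (y - ∑ i, β i • X i)

lemma real_inner_sum_smul_left (X : ι → E) (β : ι → ℝ) (θ : E) :
    ⟪∑ i, β i • X i, θ⟫ = ∑ i, β i * ⟪X i, θ⟫ := by
  simp only [sum_inner, real_inner_smul_left]

lemma real_inner_sum_smul_le_sum_abs {X : ι → E} {θ : E} (hθ : θ ∈ lassoDualFeasible X)
    (β : ι → ℝ) : ⟪∑ i, β i • X i, θ⟫ ≤ ∑ i, |β i| := by
  rw [real_inner_sum_smul_left]
  refine Finset.sum_le_sum fun i _ => ?_
  calc β i * ⟪X i, θ⟫ ≤ |β i| * |⟪X i, θ⟫| := abs_mul (β i) _ ▸ le_abs_self _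
    _ ≤ |β i| := mul_le_of_le_one_right (abs_nonneg _) (hθ i)

lemma Finset.sum_univ_update {M : Type*} [AddCommGroup M] [DecidableEq ι] (f : ι → M) (i : ι)
    (b : M) : ∑ k, Function.update f i b k = ∑ k, f k + (b - f i) := by
  rw [Finset.sum_update_of_mem (Finset.mem_univ i),
    Finset.sum_eq_add_sum_sdiff_singleton_of_mem (Finset.mem_univ i)]
  abel

lemma lassoObjective_update [DecidableEq ι] (X : ι → E) (y : E) (lam : ℝ) (β : ι → ℝ) (i : ι)
    (t : ℝ) :
    lassoObjective X y lam (Function.update β i (β i + t)) =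
      lassoObjective X y lam β + t * ⟪∑ k, β k • X k - y, X i⟫ + t ^ 2 / 2 * ‖X i‖ ^ 2 +
        lam * (|β i + t| - |β i|) := by
  have hsum : ∑ k, Function.update β i (β i + t) k • X k = ∑ k, β k • X k + t • X i := by
    simp only [Function.apply_update (fun k c => c • X k), Finset.sum_univ_update, add_smul,
      add_sub_cancel_left]
  have habs : ∑ k, |Function.update β i (β i + t) k| = ∑ k, |β k| + (|β i + t| - |β i|) := by
    simp only [Function.apply_update (fun _ c => |c|), Finset.sum_univ_update]
  rw [lassoObjective, lassoObjective, hsum, habs, add_sub_right_comm, norm_add_sq_real,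
    real_inner_smul_right, norm_smul, mul_pow, Real.norm_eq_abs, sq_abs]
  ring

variable {X : ι → E} {y : E} {lam : ℝ} {β : ι → ℝ}

lemma lassoObjective_update_sub_nonneg
    (hβ : ∀ β', lassoObjective X y lam β ≤ lassoObjective X y lam β') (i : ι) (t : ℝ) :
    0 ≤ t * ⟪∑ k, β k • X k - y, X i⟫ + t ^ 2 / 2 * ‖X i‖ ^ 2 + lam * (|β i + t| - |β i|) := by
  classical
  have := hβ (Function.update β i (β i + t))
  rw [lassoObjective_update] at this
  linarith

lemma mul_real_inner_lassoDual (hlam : lam ≠ 0) (i : ι) :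
    lam * ⟪X i, lassoDual X y lam β⟫ = -⟪∑ k, β k • X k - y, X i⟫ := by
  rw [lassoDual, real_inner_smul_right, ← mul_assoc, mul_inv_cancel₀ hlam, one_mul,
    real_inner_comm, ← neg_sub, inner_neg_left]

lemma lassoDual_mem_lassoDualFeasible (hlam : 0 < lam)
    (hβ : ∀ β', lassoObjective X y lam β ≤ lassoObjective X y lam β') :
    lassoDual X y lam β ∈ lassoDualFeasible X := by
  intro i
  have hdual := mul_real_inner_lassoDual (X := X) (y := y) (β := β) hlam.ne' i
  set g := ⟪∑ k, β k • X k - y, X i⟫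
  -- moving `βᵢ` by `±s` changes the penalty `|βᵢ|` by at most `s`
  have hup : 0 ≤ lam + g := nonneg_of_forall_mul_add_sq_nonneg (c := ‖X i‖ ^ 2 / 2)
    fun s hs _ => by
      have := lassoObjective_update_sub_nonneg hβ i s
      have : |β i + s| - |β i| ≤ s := by linarith [abs_add_le (β i) s, abs_of_pos hs]
      nlinarith
  have hlo : 0 ≤ lam - g := nonneg_of_forall_mul_add_sq_nonneg (c := ‖X i‖ ^ 2 / 2)
    fun s hs _ => by
      have := lassoObjective_update_sub_nonneg hβ i (-s)
      have : |β i + -s| - |β i| ≤ s := by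
        linarith [abs_add_le (β i) (-s), abs_neg s, abs_of_pos hs]
      nlinarith
  rw [abs_le]
  constructor <;> nlinarith

lemma abs_le_mul_real_inner_lassoDual (hlam : 0 < lam)
    (hβ : ∀ β', lassoObjective X y lam β ≤ lassoObjective X y lam β') (i : ι) :
    |β i| ≤ β i * ⟪X i, lassoDual X y lam β⟫ := by
  have hdual := mul_real_inner_lassoDual (X := X) (y := y) (β := β) hlam.ne' i
  -- shrink `βᵢ` towards `0` by the factor `1 - s`
  have := nonneg_of_forall_mul_add_sq_nonneg
    (a := lam * (β i * ⟪X i, lassoDual X y lam β⟫ - |β i|)) (c := β i ^ 2 * ‖X i‖ ^ 2 / 2)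
    fun s _ hs1 => by
      have h := lassoObjective_update_sub_nonneg hβ i (-s * β i)
      rw [show β i + -s * β i = (1 - s) * β i by ring, abs_mul,
        abs_of_nonneg (sub_nonneg.mpr hs1)] at h
      linear_combination h - s * β i * hdual
  exact sub_nonneg.mp (nonneg_of_mul_nonneg_right this hlam)

lemma eq_zero_of_abs_real_inner_lassoDual_lt_one (hlam : 0 < lam)
    (hβ : ∀ β', lassoObjective X y lam β ≤ lassoObjective X y lam β') {i : ι}
    (hi : |⟪X i, lassoDual X y lam β⟫| < 1) : β i = 0 := by
  have h := abs_le_mul_real_inner_lassoDual hlam hβ i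
  have : β i * ⟪X i, lassoDual X y lam β⟫ ≤ |β i| * |⟪X i, lassoDual X y lam β⟫| :=
    abs_mul (β i) _ ▸ le_abs_self _
  by_contra hne
  nlinarith [abs_pos.mpr hne]

lemma real_inner_lassoDual_sub_nonneg (hlam : 0 < lam)
    (hβ : ∀ β', lassoObjective X y lam β ≤ lassoObjective X y lam β') {θ : E}
    (hθ : θ ∈ lassoDualFeasible X) :
    0 ≤ ⟪lassoDual X y lam β - (1 / lam) • y, θ - lassoDual X y lam β⟫ := by
  have hres : lassoDual X y lam β - (1 / lam) • y = -(lam⁻¹ • ∑ i, β i • X i) := by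
    rw [lassoDual, one_div, smul_sub]
    abel
  have hle : ⟪∑ i, β i • X i, θ⟫ ≤ ⟪∑ i, β i • X i, lassoDual X y lam β⟫ := by
    refine (real_inner_sum_smul_le_sum_abs hθ β).trans ?_
    rw [real_inner_sum_smul_left]
    exact Finset.sum_le_sum fun i _ => abs_le_mul_real_inner_lassoDual hlam hβ i
  rw [hres, inner_neg_left, real_inner_smul_left, inner_sub_right]
  nlinarith [inv_pos.mpr hlam]

end Lasso

theorem stmt_15_general {n p : ℕ} (X : Fin p → EuclideanSpace ℝ (Fin n))
    (y : EuclideanSpace ℝ (Fin n)) (lam1 lam2 : ℝ) (hlam2 : 0 < lam2)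
    (θ1 : EuclideanSpace ℝ (Fin n))
    (hθ1mem : ∀ j, |(⟪X j, θ1⟫)| ≤ 1)
    (hθ1opt : ∀ θ : EuclideanSpace ℝ (Fin n), (∀ j, |(⟪X j, θ⟫)| ≤ 1) →
      ‖θ1 - (1 / lam1) • y‖ ≤ ‖θ - (1 / lam1) • y‖)
    (j : Fin p) (uplus uminus : ℝ)
    (huplus : IsGreatest {v : ℝ | ∃ θ : EuclideanSpace ℝ (Fin n),
        (⟪θ1 - (1 / lam1) • y, θ - θ1⟫ ≥ 0 ∧ ⟪θ - (1 / lam2) • y, θ1 - θ⟫ ≥ 0) ∧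
        v = ⟪X j, θ⟫} uplus)
    (huminus : IsGreatest {v : ℝ | ∃ θ : EuclideanSpace ℝ (Fin n),
        (⟪θ1 - (1 / lam1) • y, θ - θ1⟫ ≥ 0 ∧ ⟪θ - (1 / lam2) • y, θ1 - θ⟫ ≥ 0) ∧
        v = ⟪-X j, θ⟫} uminus)
    (hup : uplus < 1) (hum : uminus < 1)
    (β2 : Fin p → ℝ)
    (hβ2opt : ∀ β : Fin p → ℝ,
      (1 / 2) * ‖(∑ i, β2 i • X i) - y‖ ^ 2 + lam2 * ∑ i, |β2 i| ≤
      (1 / 2) * ‖(∑ i, β i • X i) - y‖ ^ 2 + lam2 * ∑ i, |β i|) :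
    β2 j = 0 := by
  have hβ2 : ∀ β, lassoObjective X y lam2 β2 ≤ lassoObjective X y lam2 β := hβ2opt
  set θ2 := lassoDual X y lam2 β2
  have hθ2 : θ2 ∈ lassoDualFeasible X := lassoDual_mem_lassoDualFeasible hlam2 hβ2
  have hΩ : ⟪θ1 - (1 / lam1) • y, θ2 - θ1⟫ ≥ 0 ∧ ⟪θ2 - (1 / lam2) • y, θ1 - θ2⟫ ≥ 0 :=
    ⟨real_inner_sub_nonneg_of_forall_norm_sub_le (convex_lassoDualFeasible X) hθ1mem hθ1opt hθ2,
      real_inner_lassoDual_sub_nonneg hlam2 hβ2 hθ1mem⟩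
  have hplus : ⟪X j, θ2⟫ ≤ uplus := huplus.2 ⟨θ2, hΩ, rfl⟩
  have hminus : ⟪-X j, θ2⟫ ≤ uminus := huminus.2 ⟨θ2, hΩ, rfl⟩
  rw [inner_neg_left] at hminus
  exact eq_zero_of_abs_real_inner_lassoDual_lt_one hlam2 hβ2 (abs_lt.mpr ⟨by linarith, by linarith⟩)

/-- Sasvi safe screening: with `u_j⁺ = max_{θ ∈ Ω} ⟪x_j, θ⟫` and
`u_j⁻ = max_{θ ∈ Ω} ⟪-x_j, θ⟫`, if `u_j⁺ < 1` and `u_j⁻ < 1`, then the `j`-th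
coefficient of any optimal Lasso solution at parameter `λ₂` is zero. -/
theorem stmt_15 {n p : ℕ} (X : Fin p → EuclideanSpace ℝ (Fin n))
    (y : EuclideanSpace ℝ (Fin n)) (lam1 lam2 : ℝ) (hlam2 : 0 < lam2) (hlam12 : lam2 < lam1)
    (θ1 : EuclideanSpace ℝ (Fin n))
    (hθ1mem : ∀ j, |(⟪X j, θ1⟫)| ≤ 1)
    (hθ1opt : ∀ θ : EuclideanSpace ℝ (Fin n), (∀ j, |(⟪X j, θ⟫)| ≤ 1) →
      ‖θ1 - (1 / lam1) • y‖ ≤ ‖θ - (1 / lam1) • y‖)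
    (j : Fin p) (uplus uminus : ℝ)
    (huplus : IsGreatest {v : ℝ | ∃ θ : EuclideanSpace ℝ (Fin n),
        (⟪θ1 - (1 / lam1) • y, θ - θ1⟫ ≥ 0 ∧ ⟪θ - (1 / lam2) • y, θ1 - θ⟫ ≥ 0) ∧
        v = ⟪X j, θ⟫} uplus)
    (huminus : IsGreatest {v : ℝ | ∃ θ : EuclideanSpace ℝ (Fin n),
        (⟪θ1 - (1 / lam1) • y, θ - θ1⟫ ≥ 0 ∧ ⟪θ - (1 / lam2) • y, θ1 - θ⟫ ≥ 0) ∧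
        v = ⟪-X j, θ⟫} uminus)
    (hup : uplus < 1) (hum : uminus < 1)
    (β2 : Fin p → ℝ)
    (hβ2opt : ∀ β : Fin p → ℝ,
      (1 / 2) * ‖(∑ i, β2 i • X i) - y‖ ^ 2 + lam2 * ∑ i, |β2 i| ≤
      (1 / 2) * ‖(∑ i, β i • X i) - y‖ ^ 2 + lam2 * ∑ i, |β i|) :
    β2 j = 0 :=
  stmt_15_general X y lam1 lam2 hlam2 θ1 hθ1mem hθ1opt j uplus uminus huplus huminus hup hum β2
    hβ2opt
end
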